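/- (Minimal bound, asymptotic form) Let q be a prime power and let R be a real number with 0 < R < (1/2)·log_q(q² / (q² − q + 1)). Then there exists N such that for every n ≥ N there exists a minimal linear code of length n and dimension at least ⌊R·n⌋ over F_q. -/

import Mathlib

/-!
Let the rows of a generator matrix `G ∈ F^{n×k}` be the coordinate functionals of the code
`{G u}`. If every linearly independent pair of messages `u, v` has a coordinate vanishing on `u`
but not on `v`, then `supp (G v) ⊄ supp (G u)`, so the code is minimal, and `G` is injective
once `k ≥ 2`. For a fixed independent pair, `g ↦ (g ⬝ u, g ⬝ v)` maps `F^k` onto `F²`, so a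
uniformly random row fails to separate the pair with probability `(q² - q + 1) / q²`. A union
bound over the at most `q^{2k}` pairs yields a good `G` whenever `q^{2k} (q² - q + 1)^n < q^{2n}`,
and for `k = ⌊R n⌋` this holds for every `n ≥ 1` because `q^{2R} (q² - q + 1) < q²`.
-/

def supp {n : ℕ} {F : Type} [Field F] [DecidableEq F] (c : Fin n → F) : Finset (Fin n) :=
  Finset.univ.filter (fun i => c i ≠ 0)

open Finset

theorem card_filter_mem_mul_card_of_surjective {V W Φ : Type*} [AddGroup V] [Fintype V]
    [AddMonoid W] [Fintype W] [DecidableEq W] [FunLike Φ V W] [AddMonoidHomClass Φ V W]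
    {f : Φ} (hf : Function.Surjective f) (S : Finset W) :
    #{v | f v ∈ S} * Fintype.card W = #S * Fintype.card V := by
  have hfiber : ∀ w, #{v | f v = w} = #{v | f v = 0} := fun w =>
    AddMonoidHom.card_fiber_eq_of_mem_range f (hf w) (hf 0)
  have hS : #{v | f v ∈ S} = #S * #{v | f v = 0} := by
    rw [card_eq_sum_card_fiberwise (s := {v | f v ∈ S}) (t := S) fun v hv => (mem_filter.1 hv).2,
      ← smul_eq_mul, ← sum_const]
    refine sum_congr rfl fun w hw => ?_
    rw [filter_filter, ← hfiber w]
    congr 1 with v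
    simp only [mem_filter, mem_univ, true_and]
    exact ⟨And.right, fun hv => ⟨hv ▸ hw, hv⟩⟩
  have hV : Fintype.card V = Fintype.card W * #{v | f v = 0} := by
    rw [← card_univ, card_eq_sum_card_fiberwise (f := f) (t := univ) fun v _ => mem_univ _]
    simp [hfiber]
  rw [hS, hV]
  ring

-- The decidability instance of the filter is left free so that the lemma also matches
-- `Nat.decidableForallFin` when `α = Fin n`.
theorem card_filter_forall_apply {α β : Type*} [Fintype α] [DecidableEq α] [Fintype β]
    [DecidableEq β] (P : β → Prop) [DecidablePred P]
    [DecidablePred fun G : α → β => ∀ i, P (G i)] :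
    #{G : α → β | ∀ i, P (G i)} = #{b | P b} ^ Fintype.card α := by
  have : ({G : α → β | ∀ i, P (G i)} : Finset _) = Fintype.piFinset fun _ => {b | P b} := by
    ext G
    simp [Fintype.mem_piFinset]
  rw [this, Fintype.card_piFinset, prod_const, card_univ]

theorem Matrix.mulVec_surjective_of_linearIndependent_row {F m ι : Type*} [Field F] [Fintype m]
    [Fintype ι] [DecidableEq m] {M : Matrix m ι F} (hM : LinearIndependent F M.row) :
    Function.Surjective M.mulVec := by
  have h := hM.rank_matrix
  rw [Matrix.rank, ← Module.finrank_fintype_fun_eq_card (R := F)] at h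
  exact LinearMap.range_eq_top.1 (Submodule.eq_top_of_finrank_eq h)

variable {F : Type} [Field F]

theorem card_filter_fst_eq_zero_imp_snd_eq_zero [Fintype F] [DecidableEq F] :
    #{p : F × F | p.1 = 0 → p.2 = 0} = Fintype.card F ^ 2 - Fintype.card F + 1 := by
  have hsplit : ({p : F × F | p.1 = 0 → p.2 = 0} : Finset _) =
      (univ.erase 0 ×ˢ univ).disjUnion {0} (by simp) := by
    ext ⟨a, b⟩
    by_cases ha : a = 0 <;> simp [ha, Prod.ext_iff]
  rw [hsplit, card_disjUnion, card_product, card_erase_of_mem (mem_univ _), card_univ,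
    card_singleton, sq, Nat.sub_one_mul]

theorem card_filter_dotProduct_imp_mul_card_sq [Fintype F] [DecidableEq F] {ι : Type*}
    [Fintype ι] [DecidableEq ι] {u v : ι → F} (huv : LinearIndependent F ![u, v]) :
    #{g : ι → F | g ⬝ᵥ u = 0 → g ⬝ᵥ v = 0} * Fintype.card F ^ 2
      = (Fintype.card F ^ 2 - Fintype.card F + 1) * Fintype.card F ^ Fintype.card ι := by
  set f := (LinearEquiv.finTwoArrow F F).toLinearMap ∘ₗ (Matrix.of ![u, v]).mulVecLin
  have hf : Function.Surjective f := (LinearEquiv.finTwoArrow F F).surjective.comp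
    (Matrix.mulVec_surjective_of_linearIndependent_row huv)
  have key := card_filter_mem_mul_card_of_surjective hf {p : F × F | p.1 = 0 → p.2 = 0}
  rw [card_filter_fst_eq_zero_imp_snd_eq_zero, Fintype.card_prod, Fintype.card_fun, ← sq] at key
  convert key using 3
  ext g
  simp [f, Matrix.mulVec, dotProduct_comm g]

theorem card_filter_forall_dotProduct_imp_mul_card_pow [Fintype F] [DecidableEq F] {n : ℕ}
    {ι : Type*} [Fintype ι] [DecidableEq ι] {u v : ι → F} (huv : LinearIndependent F ![u, v]) :
    #{G : Fin n → ι → F | ∀ i, G i ⬝ᵥ u = 0 → G i ⬝ᵥ v = 0} * Fintype.card F ^ (2 * n)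
      = (Fintype.card F ^ 2 - Fintype.card F + 1) ^ n * Fintype.card F ^ (Fintype.card ι * n) := by
  rw [card_filter_forall_apply fun g : ι → F => g ⬝ᵥ u = 0 → g ⬝ᵥ v = 0, Fintype.card_fin,
    pow_mul, ← mul_pow, card_filter_dotProduct_imp_mul_card_sq huv, mul_pow, pow_mul]

def IsMinimalCode [DecidableEq F] {n : ℕ} (C : Submodule F (Fin n → F)) : Prop :=
  ∀ c ∈ C, c ≠ 0 → ∀ c' ∈ C, supp c' ⊆ supp c → ∃ lam : F, c' = lam • c

def SeparatesPairs {m ι : Type*} [Fintype ι] (G : Matrix m ι F) : Prop :=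
  ∀ u v : ι → F, LinearIndependent F ![u, v] → ∃ i, G i ⬝ᵥ u = 0 ∧ G i ⬝ᵥ v ≠ 0

namespace SeparatesPairs

variable {ι : Type*} [Fintype ι]

theorem isMinimalCode_range [DecidableEq F] {n : ℕ} {G : Matrix (Fin n) ι F}
    (hG : SeparatesPairs G) : IsMinimalCode (LinearMap.range G.mulVecLin) := by
  unfold IsMinimalCode
  rintro _ ⟨u, rfl⟩ hu _ ⟨v, rfl⟩ hsupp
  have hu0 : u ≠ 0 := by
    rintro rfl
    exact hu (map_zero _)
  by_contra hdep
  have huv : LinearIndependent F ![u, v] :=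
    (LinearIndependent.pair_iff' hu0).2 fun a h => hdep ⟨a, by rw [← h, map_smul]⟩
  obtain ⟨i, hui, hvi⟩ := hG u v huv
  exact (mem_filter.1 (hsupp (mem_filter.2 ⟨mem_univ i, hvi⟩))).2 hui

theorem mulVec_injective {m : Type*} {G : Matrix m ι F} (hι : 2 ≤ Fintype.card ι)
    (hG : SeparatesPairs G) :
    Function.Injective G.mulVec := by
  refine (injective_iff_map_eq_zero G.mulVecLin).2 fun u hu => ?_
  by_contra hu0
  obtain ⟨v, huv⟩ := exists_linearIndependent_pair_of_one_lt_finrank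
    (by rwa [Module.finrank_fintype_fun_eq_card]) hu0
  obtain ⟨i, -, hui⟩ := hG v u (LinearIndependent.pair_symm_iff.1 huv)
  exact hui (congrFun hu i)

theorem finrank_range {m : Type*} {G : Matrix m ι F} (hι : 2 ≤ Fintype.card ι)
    (hG : SeparatesPairs G) :
    Module.finrank F (LinearMap.range G.mulVecLin) = Fintype.card ι := by
  rw [LinearMap.finrank_range_of_inj (hG.mulVec_injective hι), Module.finrank_fintype_fun_eq_card]

end SeparatesPairs

theorem exists_separatesPairs [Fintype F] [DecidableEq F] {n : ℕ} {ι : Type*} [Fintype ι]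
    [DecidableEq ι]
    (h : Fintype.card F ^ (2 * Fintype.card ι) * (Fintype.card F ^ 2 - Fintype.card F + 1) ^ n
      < Fintype.card F ^ (2 * n)) :
    ∃ G : Matrix (Fin n) ι F, SeparatesPairs G := by
  set q := Fintype.card F
  by_contra hne
  classical
  let pairs : Finset ((ι → F) × (ι → F)) := {p | LinearIndependent F ![p.1, p.2]}
  let bad (p : (ι → F) × (ι → F)) : Finset (Fin n → ι → F) :=
    {G | ∀ i, G i ⬝ᵥ p.1 = 0 → G i ⬝ᵥ p.2 = 0}
  have hcover : (univ : Finset (Fin n → ι → F)) ⊆ pairs.biUnion bad := by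
    intro G _
    obtain ⟨u, v, huv, hG⟩ : ∃ u v, LinearIndependent F ![u, v] ∧
        ∀ i, G i ⬝ᵥ u = 0 → G i ⬝ᵥ v = 0 := by
      simpa [SeparatesPairs] using fun h' => hne ⟨G, h'⟩
    exact mem_biUnion.2 ⟨(u, v), by simpa [pairs], by simpa [bad]⟩
  have hbad : ∀ p ∈ pairs,
      #(bad p) * q ^ (2 * n) = (q ^ 2 - q + 1) ^ n * q ^ (Fintype.card ι * n) := fun p hp =>
    card_filter_forall_dotProduct_imp_mul_card_pow (by simpa [pairs] using hp)
  have hpairs : #pairs ≤ q ^ (2 * Fintype.card ι) :=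
    (card_filter_le _ _).trans (by simp [q, pow_mul', sq])
  have hcount : q ^ (Fintype.card ι * n) * q ^ (2 * n)
      ≤ q ^ (Fintype.card ι * n) * (q ^ (2 * Fintype.card ι) * (q ^ 2 - q + 1) ^ n) :=
    calc q ^ (Fintype.card ι * n) * q ^ (2 * n)
        = #(univ : Finset (Fin n → ι → F)) * q ^ (2 * n) := by simp [q, ← pow_mul, mul_comm]
      _ ≤ (∑ p ∈ pairs, #(bad p)) * q ^ (2 * n) :=
        Nat.mul_le_mul_right _ ((card_le_card hcover).trans card_biUnion_le)
      _ = #pairs * ((q ^ 2 - q + 1) ^ n * q ^ (Fintype.card ι * n)) := by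
        rw [sum_mul, sum_congr rfl hbad, sum_const, smul_eq_mul]
      _ ≤ q ^ (2 * Fintype.card ι) * ((q ^ 2 - q + 1) ^ n * q ^ (Fintype.card ι * n)) :=
        Nat.mul_le_mul_right _ hpairs
      _ = _ := by ring
  exact absurd hcount (not_le.2 (Nat.mul_lt_mul_of_pos_left h (by positivity)))

theorem rpow_two_mul_mul_lt_sq {x c R : ℝ} (hx : 1 < x) (hc : 0 < c)
    (hR : R < 1 / 2 * Real.logb x (x ^ 2 / c)) : x ^ (2 * R) * c < x ^ 2 := by
  have h : 2 * R < Real.logb x (x ^ 2 / c) := by linarith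
  rwa [Real.lt_logb_iff_rpow_lt hx (by positivity), lt_div_iff₀ hc] at h

theorem pow_two_mul_mul_pow_lt {q c k n : ℕ} {R : ℝ} (hq : 1 ≤ q)
    (hR : (q : ℝ) ^ (2 * R) * c < (q : ℝ) ^ 2) (hk : (k : ℝ) ≤ R * n) (hn : n ≠ 0) :
    q ^ (2 * k) * c ^ n < q ^ (2 * n) := by
  have hpow : (q : ℝ) ^ (2 * k) ≤ ((q : ℝ) ^ (2 * R)) ^ n := by
    rw [← Real.rpow_natCast, ← Real.rpow_mul_natCast (Nat.cast_nonneg q)]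
    exact Real.rpow_le_rpow_of_exponent_le (by exact_mod_cast hq) (by push_cast; linarith)
  exact_mod_cast calc (q : ℝ) ^ (2 * k) * c ^ n
      ≤ ((q : ℝ) ^ (2 * R)) ^ n * c ^ n := by gcongr
    _ = ((q : ℝ) ^ (2 * R) * c) ^ n := (mul_pow _ _ _).symm
    _ < ((q : ℝ) ^ 2) ^ n := pow_lt_pow_left₀ hR (by positivity) hn
    _ = (q : ℝ) ^ (2 * n) := (pow_mul _ _ _).symm

/-- Minimal bound (asymptotic form): over any finite field `F_q`, for every rate
`0 < R < (1/2)·log_q(q² / (q² - q + 1))`, for all sufficiently large lengths `n` there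
exists a minimal linear code of length `n` and dimension at least `⌊R·n⌋` over `F_q`. -/
theorem exists_minimal_codes_of_rate {F : Type} [Field F] [Fintype F] [DecidableEq F]
    (R : ℝ) (hR0 : 0 < R)
    (hR : R < (1 / 2) * Real.logb (Fintype.card F)
        ((Fintype.card F : ℝ) ^ 2 /
          ((Fintype.card F : ℝ) ^ 2 - (Fintype.card F : ℝ) + 1))) :
    ∃ N : ℕ, ∀ n : ℕ, N ≤ n →
      ∃ C : Submodule F (Fin n → F),
        ⌊R * n⌋₊ ≤ Module.finrank F C ∧
        ∀ c ∈ C, c ≠ 0 → ∀ c' ∈ C, supp c' ⊆ supp c → ∃ lam : F, c' = lam • c := by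
  set q := Fintype.card F
  have hq : 1 < q := Fintype.one_lt_card
  have hrate : (q : ℝ) ^ (2 * R) * ((q ^ 2 - q + 1 : ℕ) : ℝ) < (q : ℝ) ^ 2 := by
    rw [Nat.cast_add, Nat.cast_sub (Nat.le_self_pow two_ne_zero q)]
    push_cast
    exact rpow_two_mul_mul_lt_sq (by exact_mod_cast hq) (by nlinarith) hR
  refine ⟨⌈2 / R⌉₊, fun n hn => ?_⟩
  have hRn : 2 ≤ R * n := (div_le_iff₀' hR0).1 ((Nat.le_ceil _).trans (by exact_mod_cast hn))
  have hn0 : n ≠ 0 := by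
    rintro rfl
    norm_num at hRn
  have hk : 2 ≤ ⌊R * n⌋₊ := Nat.le_floor (by exact_mod_cast hRn)
  obtain ⟨G, hG⟩ := exists_separatesPairs (F := F) (n := n) (ι := Fin ⌊R * n⌋₊) (by
    simpa using pow_two_mul_mul_pow_lt hq.le hrate (Nat.floor_le (by positivity)) hn0)
  exact ⟨_, (hG.finrank_range (by simpa using hk)).ge.trans' (by simp), hG.isMinimalCode_range⟩
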